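/- arXiv:1803.02673 — 2 statements merged into one kernel-verified Lean document; each statement's English description precedes it below -/
import Mathlib

section
/- Given density operators ρ and σ on ℂ^d, there exist decompositions ρ = ∑ᵢ sᵢ|uᵢ⟩⟨uᵢ| and σ = ∑ᵢ tᵢ|vᵢ⟩⟨vᵢ| with unit vectors uᵢ, vᵢ, the vᵢ orthonormal, ⟨vᵢ|uᵢ⟩ ≥ 0 for all i, and F(ρ,σ) = ∑ᵢ √(sᵢtᵢ)⟨vᵢ|uᵢ⟩. -/
open scoped Matrix Kronecker ComplexOrder

noncomputable section

namespace QEMD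

variable {m n : Type*} [Fintype m] [Fintype n] [DecidableEq m] [DecidableEq n]

/-- Total square root: the PSD square root if `A` is PSD, else `0`. -/
def msqrt (A : Matrix n n ℂ) : Matrix n n ℂ :=
  letI := Classical.dec A.PosSemidef
  if h : A.PosSemidef then
    (h.1.eigenvectorUnitary : Matrix n n ℂ) *
      Matrix.diagonal ((↑) ∘ (Real.sqrt ·) ∘ h.1.eigenvalues) *
      (star h.1.eigenvectorUnitary : Matrix n n ℂ)
  else 0

/-- Trace norm `‖A‖₁ = Tr √(AᴴA)`. -/
def traceNorm (A : Matrix n n ℂ) : ℝ :=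
  ((msqrt (Aᴴ * A)).trace).re

/-- Trace distance `D(ρ,σ) = ½‖ρ-σ‖₁`. -/
def traceDist (ρ σ : Matrix n n ℂ) : ℝ := traceNorm (ρ - σ) / 2

/-- Fidelity `F(ρ,σ) = Tr √(√ρ σ √ρ)`. -/
def fidelity (ρ σ : Matrix n n ℂ) : ℝ :=
  ((msqrt (msqrt ρ * σ * msqrt ρ)).trace).re

/-- Density matrix predicate. -/
def IsDensity (ρ : Matrix n n ℂ) : Prop := ρ.PosSemidef ∧ ρ.trace = 1

/-- Projector `|v⟩⟨v|` onto a vector. -/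
def proj (v : n → ℂ) : Matrix n n ℂ := Matrix.of fun i j => v i * star (v j)

/-- Partial trace over the first (left) factor. -/
def traceLeft (ρ : Matrix (m × n) (m × n) ℂ) : Matrix n n ℂ :=
  Matrix.of fun i j => ∑ k, ρ (k, i) (k, j)

/-- Partial trace over the second (right) factor. -/
def traceRight (ρ : Matrix (m × n) (m × n) ℂ) : Matrix m m ℂ :=
  Matrix.of fun i j => ∑ k, ρ (i, k) (j, k)

/-- The swap operator `S|αβ⟩ = |βα⟩` on `ℂ^d ⊗ ℂ^d`. -/
def swap (d : ℕ) : Matrix (Fin d × Fin d) (Fin d × Fin d) ℂ :=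
  Matrix.of fun p q => if p.1 = q.2 ∧ p.2 = q.1 then 1 else 0

/-- Projection onto the symmetric subspace, `P_s = (I + S)/2`. -/
def Psym (d : ℕ) : Matrix (Fin d × Fin d) (Fin d × Fin d) ℂ := (2:ℂ)⁻¹ • (1 + swap d)

/-- Projection onto the antisymmetric subspace, `P_as = (I - S)/2`. -/
def Pasym (d : ℕ) : Matrix (Fin d × Fin d) (Fin d × Fin d) ℂ := (2:ℂ)⁻¹ • (1 - swap d)

/-- `ρAB` is a quantum coupling of `ρA` and `ρB`. -/
def IsCoupling (ρAB : Matrix (m × n) (m × n) ℂ) (ρA : Matrix m m ℂ)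
    (ρB : Matrix n n ℂ) : Prop :=
  IsDensity ρAB ∧ traceRight ρAB = ρA ∧ traceLeft ρAB = ρB

/-- The maximally entangled vector `|Φ⟩ = (1/√d) ∑ᵢ |i⟩|i⟩`. -/
def maxEnt (d : ℕ) : Fin d × Fin d → ℂ :=
  fun p => if p.1 = p.2 then ((1 / Real.sqrt d : ℝ) : ℂ) else 0


end QEMD

/-!
Diagonalise `σ = ∑ tᵢ |vᵢ⟩⟨vᵢ|` and let `B` have columns `√tᵢ vᵢ`, so `σ = B Bᴴ`. A polar
decomposition gives a unitary `V` with `P = √ρ B V ≥ 0`; then `P² = √ρ σ √ρ`, so `F(ρ, σ) = Tr P`,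
while `A = √ρ Vᴴ` satisfies `A Aᴴ = ρ` and `Bᴴ A = V P Vᴴ ≥ 0` (Uhlmann). Writing the `i`-th
column `aᵢ` of `A` as `√sᵢ uᵢ` up to a phase, chosen so that `⟨vᵢ|uᵢ⟩ ≥ 0`, gives
`ρ = ∑ sᵢ |uᵢ⟩⟨uᵢ|`; the diagonal entries `(Bᴴ A)ᵢᵢ = √tᵢ ⟨vᵢ|aᵢ⟩` are nonnegative, hence equal
to `√(sᵢ tᵢ) ⟨vᵢ|uᵢ⟩`, and they add up to `F`.
-/

namespace QEMD

open Matrix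

variable {m n : Type*}

theorem proj_smul (c : ℂ) (v : n → ℂ) : proj (c • v) = ((‖c‖ ^ 2 : ℝ) : ℂ) • proj v := by
  ext j k
  simp only [proj, of_apply, Matrix.smul_apply, Pi.smul_apply, smul_eq_mul, star_mul',
    Complex.star_def]
  rw [Complex.ofReal_pow, ← Complex.mul_conj']
  ring

section RankOne

variable [Fintype n]

theorem mul_conjTranspose_eq_sum_proj (A : Matrix m n ℂ) : A * Aᴴ = ∑ i, proj (Aᵀ i) := by
  ext j k
  simp [proj, mul_apply, Matrix.sum_apply]

theorem sum_smul_proj_eq_mul_conjTranspose {t : n → ℝ} (ht : ∀ i, 0 ≤ t i) (v : n → m → ℂ) :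
    ∑ i, (t i : ℂ) • proj (v i) =
      (of fun k i => (√(t i) : ℂ) * v i k) * (of fun k i => (√(t i) : ℂ) * v i k)ᴴ := by
  rw [mul_conjTranspose_eq_sum_proj]
  refine Finset.sum_congr rfl fun i _ => ?_
  rw [show (of fun k i => (√(t i) : ℂ) * v i k)ᵀ i = (√(t i) : ℂ) • v i from rfl, proj_smul,
    Complex.norm_real, Real.norm_of_nonneg (Real.sqrt_nonneg _), Real.sq_sqrt (ht i)]

theorem trace_proj {v : n → ℂ} (hv : ∑ k, ‖v k‖ ^ 2 = 1) : (proj v).trace = 1 := by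
  have : ∑ k, ((‖v k‖ ^ 2 : ℝ) : ℂ) = 1 := by exact_mod_cast hv
  simpa [trace, proj, Complex.mul_conj'] using this

theorem le_one_of_trace_sum_smul_proj_eq_one {ι : Type*} [Fintype ι] {s : ι → ℝ}
    {u : ι → n → ℂ} (hs : ∀ i, 0 ≤ s i) (hu : ∀ i, ∑ k, ‖u i k‖ ^ 2 = 1)
    (htr : (∑ i, (s i : ℂ) • proj (u i)).trace = 1) (i : ι) : s i ≤ 1 := by
  have hsum : ∑ j, s j = 1 := by
    simp only [trace_sum, trace_smul, trace_proj (hu _), smul_eq_mul, mul_one] at htr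
    exact_mod_cast htr
  exact hsum ▸ Finset.single_le_sum (fun j _ => hs j) (Finset.mem_univ i)

theorem sum_star_mul_eq_ite_of_orthonormal {ι : Type*} [DecidableEq ι] {v : ι → EuclideanSpace ℂ n}
    (hv : Orthonormal ℂ v) (i j : ι) :
    ∑ k, star (v i k) * v j k = if i = j then 1 else 0 := by
  rw [← orthonormal_iff_ite.mp hv i j, EuclideanSpace.inner_eq_star_dotProduct, dotProduct_comm]
  rfl

theorem sum_norm_sq_of_orthonormal {ι : Type*} {v : ι → EuclideanSpace ℂ n}
    (hv : Orthonormal ℂ v) (i : ι) : ∑ k, ‖v i k‖ ^ 2 = 1 := by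
  rw [← EuclideanSpace.norm_sq_eq, hv.1 i, one_pow]

theorem exists_proj_eq_smul_proj_star_dotProduct_nonneg (a v : n → ℂ)
    (hv : ∑ k, ‖v k‖ ^ 2 = 1) :
    ∃ (s : ℝ) (u : n → ℂ), 0 ≤ s ∧ ∑ k, ‖u k‖ ^ 2 = 1 ∧ proj a = (s : ℂ) • proj u ∧
      0 ≤ star v ⬝ᵥ u ∧ √s * (star v ⬝ᵥ u).re = ‖star v ⬝ᵥ a‖ := by
  set s := ∑ k, ‖a k‖ ^ 2
  have hs : 0 ≤ s := by positivity
  rcases hs.eq_or_lt with hs0 | hs0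
  · have ha : a = 0 := funext fun k => by
      simpa using (Finset.sum_eq_zero_iff_of_nonneg fun k _ => sq_nonneg ‖a k‖).mp hs0.symm k
        (Finset.mem_univ k)
    have hvv : star v ⬝ᵥ v = 1 := by
      have : ((∑ k, ‖v k‖ ^ 2 : ℝ) : ℂ) = 1 := by rw [hv, Complex.ofReal_one]
      simpa [dotProduct, Complex.conj_mul'] using this
    refine ⟨0, v, le_rfl, hv, ?_, by rw [hvv]; exact zero_le_one, by simp [ha]⟩
    ext
    simp [proj, ha]
  · set z := star v ⬝ᵥ a
    set ω := Complex.exp (↑(-z.arg) * Complex.I)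
    have hω : ‖ω‖ = 1 := Complex.norm_exp_ofReal_mul_I _
    have hωz : ω * z = ‖z‖ := by
      conv_lhs => rw [← Complex.norm_mul_exp_arg_mul_I z]
      rw [mul_left_comm, ← Complex.exp_add, Complex.ofReal_neg, neg_mul, neg_add_cancel,
        Complex.exp_zero, mul_one]
    set c : ℂ := ω / √s
    have hc : ‖c‖ ^ 2 = s⁻¹ := by
      rw [norm_div, hω, Complex.norm_real, Real.norm_of_nonneg (Real.sqrt_nonneg _), div_pow,
        Real.sq_sqrt hs, one_pow, one_div]
    have hcz : star v ⬝ᵥ (c • a) = ((‖z‖ / √s : ℝ) : ℂ) := by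
      rw [dotProduct_smul, smul_eq_mul, div_mul_eq_mul_div, hωz]
      push_cast
      ring
    refine ⟨s, c • a, hs, ?_, ?_, ?_, ?_⟩
    · simp only [Pi.smul_apply, smul_eq_mul, norm_mul, mul_pow, ← Finset.mul_sum, hc]
      exact inv_mul_cancel₀ hs0.ne'
    · rw [proj_smul, hc, smul_smul, Complex.ofReal_inv, mul_inv_cancel₀ (by exact_mod_cast hs0.ne'),
        one_smul]
    · rw [hcz]
      exact Complex.zero_le_real.mpr (by positivity)
    · rw [hcz, Complex.ofReal_re, mul_div_cancel₀ _ (Real.sqrt_pos.mpr hs0).ne']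

end RankOne

section Spectral

variable [Fintype n] [DecidableEq n]

theorem eq_sum_eigenvalues_smul_proj {A : Matrix n n ℂ} (hA : A.IsHermitian) :
    A = ∑ i, (hA.eigenvalues i : ℂ) • proj (hA.eigenvectorBasis i) := by
  conv_lhs => rw [hA.spectral_theorem, Unitary.conjStarAlgAut_apply]
  ext j k
  simp [proj, mul_apply, Matrix.sum_apply, diagonal, mul_assoc, mul_left_comm]

section MatrixSqrt

open scoped MatrixOrder

theorem msqrt_eq_cfcSqrt {A : Matrix n n ℂ} (hA : A.PosSemidef) : msqrt A = CFC.sqrt A := by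
  rw [msqrt, dif_pos hA, CFC.sqrt_eq_cfc, cfc_nnreal_eq_real _ A hA.nonneg, hA.1.cfc_eq]
  simp only [Matrix.IsHermitian.cfc, Unitary.conjStarAlgAut_apply]
  congr 2
  refine congrArg Matrix.diagonal (funext fun i => ?_)
  simp [Real.coe_sqrt, Real.coe_toNNReal', max_eq_left (hA.eigenvalues_nonneg i)]

theorem posSemidef_msqrt (A : Matrix n n ℂ) : (msqrt A).PosSemidef := by
  by_cases hA : A.PosSemidef
  · rw [msqrt_eq_cfcSqrt hA, ← Matrix.nonneg_iff_posSemidef]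
    exact CFC.sqrt_nonneg A
  · rw [msqrt, dif_neg hA]
    exact Matrix.PosSemidef.zero

theorem msqrt_mul_msqrt {A : Matrix n n ℂ} (hA : A.PosSemidef) : msqrt A * msqrt A = A := by
  rw [msqrt_eq_cfcSqrt hA]
  exact CFC.sqrt_mul_sqrt_self A hA.nonneg

theorem msqrt_mul_self {B : Matrix n n ℂ} (hB : B.PosSemidef) : msqrt (B * B) = B := by
  have hBB : (B * B).PosSemidef := by
    simpa only [hB.1.eq] using Matrix.posSemidef_conjTranspose_mul_self B
  rw [msqrt_eq_cfcSqrt hBB]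
  exact CFC.sqrt_mul_self B hB.nonneg

end MatrixSqrt

theorem exists_unitary_mul_diagonal_of_conjTranspose_mul_self_eq_diagonal {N : Matrix n n ℂ}
    {e : n → ℝ} (hN : Nᴴ * N = diagonal fun i => (e i : ℂ)) :
    ∃ X ∈ unitaryGroup n ℂ, N = X * diagonal fun i => (√(e i) : ℂ) := by
  -- normalise the nonzero columns of `N`, which are orthogonal, and extend to an orthonormal basis
  let c : n → EuclideanSpace ℂ n := fun i => WithLp.toLp 2 (Nᵀ i)
  have hc : ∀ i j, inner ℂ (c i) (c j) = if i = j then (e i : ℂ) else 0 := by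
    intro i j
    convert congrFun (congrFun hN i) j using 1 <;>
      simp [c, PiLp.inner_apply, mul_apply, mul_comm, diagonal_apply]
  have he : ∀ i, e i = ‖c i‖ ^ 2 := fun i => by
    have := (inner_self_eq_norm_sq_to_K (𝕜 := ℂ) (c i)).symm.trans (hc i i)
    exact Complex.ofReal_injective (by push_cast; exact (if_pos rfl ▸ this).symm)
  have hc0 : ∀ i, e i ≠ 0 → ‖c i‖ ≠ 0 := fun i hi => by simpa [he] using hi
  let w : n → EuclideanSpace ℂ n := fun i => ((‖c i‖ : ℂ)⁻¹) • c i
  have hw : Orthonormal ℂ ({i | e i ≠ 0}.domRestrict w) := by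
    rw [orthonormal_iff_ite]
    rintro ⟨i, hi⟩ ⟨j, hj⟩
    simp only [Set.domRestrict_apply, w, inner_smul_left, inner_smul_right, hc,
      Subtype.mk.injEq]
    split_ifs with hij
    · subst hij
      have := hc0 i hi
      simp [he, field]
    · simp
  obtain ⟨b, hb⟩ := hw.exists_orthonormalBasis_extension_of_card_eq finrank_euclideanSpace
  refine ⟨(EuclideanSpace.basisFun n ℂ).toBasis.toMatrix b.toBasis,
    (EuclideanSpace.basisFun n ℂ).toMatrix_orthonormalBasis_mem_unitary b, ?_⟩
  ext k i
  rw [mul_diagonal, he, Real.sqrt_sq (norm_nonneg _)]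
  by_cases hi : e i = 0
  · rw [he, sq_eq_zero_iff, norm_eq_zero] at hi
    have := congrArg (· k) hi
    simp_all [c]
  · have hbk : b i k = (‖c i‖ : ℂ)⁻¹ * N k i := by simp [hb i hi, w, c]
    have := hc0 i hi
    simp [Module.Basis.toMatrix_apply, hbk, field]

theorem exists_unitary_posSemidef_mul (M : Matrix n n ℂ) :
    ∃ V ∈ unitaryGroup n ℂ, (M * V).PosSemidef := by
  have hH := (posSemidef_self_mul_conjTranspose M).1
  set U : Matrix n n ℂ := (hH.eigenvectorUnitary : Matrix n n ℂ)
  have hU : U ∈ unitaryGroup n ℂ := hH.eigenvectorUnitary.2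
  have hD : (Mᴴ * U)ᴴ * (Mᴴ * U) = diagonal fun i => (hH.eigenvalues i : ℂ) := by
    have := hH.conjStarAlgAut_star_eigenvectorUnitary
    rw [Unitary.conjStarAlgAut_apply] at this
    simpa [mul_assoc, star_eq_conjTranspose, Function.comp_def] using this
  obtain ⟨X, hX, hMX⟩ := exists_unitary_mul_diagonal_of_conjTranspose_mul_self_eq_diagonal hD
  set S : Matrix n n ℂ := diagonal fun i => (√(hH.eigenvalues i) : ℂ)
  have hS : S.PosSemidef := posSemidef_diagonal_iff.mpr fun i => by simp [Real.sqrt_nonneg]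
  have hM : M = U * S * star X := by
    have hUU : U * Uᴴ = 1 := mem_unitaryGroup_iff.mp hU
    have := congrArg (U * ·ᴴ) hMX
    simp only [conjTranspose_mul, conjTranspose_conjTranspose, ← mul_assoc, hUU,
      one_mul] at this
    rw [this, hS.1.eq, star_eq_conjTranspose]
  refine ⟨X * star U, mul_mem hX (Unitary.star_mem hU), ?_⟩
  rw [hM, show U * S * star X * (X * star U) = U * S * (star X * X) * star U by noncomm_ring,
    mem_unitaryGroup_iff'.mp hX, mul_one]
  simpa [star_eq_conjTranspose] using hS.mul_mul_conjTranspose_same U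

theorem exists_mul_conjTranspose_eq_fidelity_eq_re_trace {ρ : Matrix n n ℂ}
    (hρ : ρ.PosSemidef) (B : Matrix n n ℂ) :
    ∃ A : Matrix n n ℂ, A * Aᴴ = ρ ∧ (Bᴴ * A).PosSemidef ∧
      fidelity ρ (B * Bᴴ) = (Bᴴ * A).trace.re := by
  set R := msqrt ρ
  have hR : R.PosSemidef := posSemidef_msqrt ρ
  obtain ⟨V, hV, hP⟩ := exists_unitary_posSemidef_mul (R * B)
  set P := R * B * V
  have hVV : V * Vᴴ = 1 := mem_unitaryGroup_iff.mp hV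
  have hVV' : Vᴴ * V = 1 := mem_unitaryGroup_iff'.mp hV
  have hVPV := hP.mul_mul_conjTranspose_same V
  have hPP : P * P = R * (B * Bᴴ) * R := calc
    P * P = P * Pᴴ := congrArg (P * ·) hP.1.eq.symm
    _ = R * (B * Bᴴ) * R := by
      simp only [P, conjTranspose_mul, hR.1.eq, mul_assoc]
      rw [← mul_assoc V, hVV, one_mul]
  have hA : Bᴴ * (R * Vᴴ) = V * P * Vᴴ := by
    rw [← hVPV.1.eq]
    simp only [P, conjTranspose_mul, conjTranspose_conjTranspose, hR.1.eq, mul_assoc]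
    rw [← mul_assoc V, hVV, one_mul]
  refine ⟨R * Vᴴ, ?_, hA ▸ hVPV, ?_⟩
  · rw [conjTranspose_mul, conjTranspose_conjTranspose, hR.1.eq, mul_assoc, ← mul_assoc Vᴴ,
      hVV', one_mul, msqrt_mul_msqrt hρ]
  · rw [fidelity, ← hPP, msqrt_mul_self hP, hA, trace_mul_cycle V P Vᴴ, hVV', one_mul]

end Spectral

theorem stmt16 (d : ℕ) (ρ σ : Matrix (Fin d) (Fin d) ℂ)
    (hρ : IsDensity ρ) (hσ : IsDensity σ) :
    ∃ (s t : Fin d → ℝ) (u v : Fin d → Fin d → ℂ),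
      (∀ i, 0 ≤ s i ∧ s i ≤ 1) ∧ (∀ i, 0 ≤ t i ∧ t i ≤ 1) ∧
      (∀ i, ∑ k, ‖u i k‖ ^ 2 = 1) ∧ (∀ i, ∑ k, ‖v i k‖ ^ 2 = 1) ∧
      (∀ i j, ∑ k, star (v i k) * v j k = if i = j then 1 else 0) ∧
      ρ = ∑ i, (s i : ℂ) • proj (u i) ∧
      σ = ∑ i, (t i : ℂ) • proj (v i) ∧
      (∀ i, 0 ≤ (∑ k, star (v i k) * u i k).re ∧
        (∑ k, star (v i k) * u i k).im = 0) ∧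
      fidelity ρ σ
        = ∑ i, Real.sqrt (s i * t i) * (∑ k, star (v i k) * u i k).re := by
  obtain ⟨hρ, hρ1⟩ := hρ
  obtain ⟨hσ, hσ1⟩ := hσ
  set t := hσ.1.eigenvalues
  have ht : ∀ i, 0 ≤ t i := hσ.eigenvalues_nonneg
  set b := hσ.1.eigenvectorBasis
  have hv : ∀ i, ∑ k, ‖b i k‖ ^ 2 = 1 := sum_norm_sq_of_orthonormal b.orthonormal
  have hσt := eq_sum_eigenvalues_smul_proj hσ.1
  set B : Matrix (Fin d) (Fin d) ℂ := of fun k i => (√(t i) : ℂ) * b i k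
  have hB : σ = B * Bᴴ := hσt.trans (sum_smul_proj_eq_mul_conjTranspose ht _)
  obtain ⟨A, hAA, hBA, hF⟩ := exists_mul_conjTranspose_eq_fidelity_eq_re_trace hρ B
  choose s u hs hu hproj hvu hnorm using fun i =>
    exists_proj_eq_smul_proj_star_dotProduct_nonneg (Aᵀ i) (b i) (hv i)
  have hρs : ρ = ∑ i, (s i : ℂ) • proj (u i) := by
    rw [← hAA, mul_conjTranspose_eq_sum_proj]
    exact Finset.sum_congr rfl fun i _ => hproj i
  have hBA_diag : ∀ i, (Bᴴ * A) i i = (√(t i) : ℂ) * (star ⇑(b i) ⬝ᵥ Aᵀ i) := fun i => by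
    simp [B, mul_apply, dotProduct, Finset.mul_sum, mul_assoc]
  refine ⟨s, t, u, fun i => b i, fun i => ⟨hs i, ?_⟩, fun i => ⟨ht i, ?_⟩, hu, hv,
    sum_star_mul_eq_ite_of_orthonormal b.orthonormal, hρs, hσt,
    fun i => ⟨(Complex.nonneg_iff.mp (hvu i)).1, (Complex.nonneg_iff.mp (hvu i)).2.symm⟩, ?_⟩
  · exact le_one_of_trace_sum_smul_proj_eq_one hs hu (hρs ▸ hρ1) i
  · exact le_one_of_trace_sum_smul_proj_eq_one ht hv (hσt ▸ hσ1) i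
  rw [hB, hF, trace, Complex.re_sum]
  refine Finset.sum_congr rfl fun i _ => ?_
  rw [diag_apply, Complex.re_eq_norm.mpr hBA.diag_nonneg, hBA_diag, norm_mul, Complex.norm_real,
    Real.norm_of_nonneg (Real.sqrt_nonneg _), ← hnorm i, Real.sqrt_mul (hs i)]
  change _ = _ * (star (b i) ⬝ᵥ u i).re
  ring
end QEMD
end
end

section
/- For any tripartite density operator ρ_{ABC} on ℂ^d ⊗ ℂ^d ⊗ ℂ^{d₂}, the fidelity between the marginals ρ_{AC} and ρ_{BC} satisfies F(ρ_{AC}, ρ_{BC}) ≥ |Tr(P_as ρ_{AB}) − Tr(P_s ρ_{AB})|, where P_s, P_as are the symmetric/antisymmetric projections on the A⊗B factor and ρ_{AB} = Tr_C ρ_{ABC}. -/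
open scoped Matrix Kronecker ComplexOrder

noncomputable section

open scoped MatrixOrder

namespace Matrix

variable {a b c : Type*} [Fintype a] [Fintype b] [Fintype c]

lemma norm_trace_mul_conjTranspose_sq_le (M N : Matrix a b ℂ) :
    ‖(M * Nᴴ).trace‖ ^ 2 ≤ (M * Mᴴ).trace.re * (N * Nᴴ).trace.re := by
  let vec : Matrix a b ℂ → EuclideanSpace ℂ (a × b) := fun M => WithLp.toLp 2 fun p => M p.1 p.2
  have trace_eq_inner : ∀ M N : Matrix a b ℂ, (M * Nᴴ).trace = inner ℂ (vec N) (vec M) := by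
    intro M N
    simp [vec, trace, mul_apply, PiLp.inner_apply, Fintype.sum_prod_type]
  have re_inner_self : ∀ x : EuclideanSpace ℂ (a × b), (inner ℂ x x).re = ‖x‖ ^ 2 := fun x => by
    simpa only [RCLike.re_to_complex] using inner_self_eq_norm_sq (𝕜 := ℂ) x
  rw [trace_eq_inner, trace_eq_inner, trace_eq_inner, re_inner_self, re_inner_self, ← mul_pow]
  gcongr
  exact norm_inner_le_norm _ _ |>.trans_eq (mul_comm _ _)

lemma PosSemidef.exists_eq_mul_conjTranspose [DecidableEq a] {S : Matrix a a ℂ}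
    (hS : S.PosSemidef) : ∃ C : Matrix a a ℂ, S = C * Cᴴ := by
  refine ⟨CFC.sqrt S, ?_⟩
  rw [(nonneg_iff_posSemidef.mp (CFC.sqrt_nonneg S)).1.eq, CFC.sqrt_mul_sqrt_self S hS.nonneg]

lemma PosSemidef.re_trace_nonneg {S : Matrix a a ℂ} (hS : S.PosSemidef) : 0 ≤ S.trace.re :=
  (Complex.le_def.mp hS.trace_nonneg).1

lemma norm_trace_mul_mul_conjTranspose_le [DecidableEq a] {S : Matrix a a ℂ} (hS : S.PosSemidef)
    {A B : Matrix a b ℂ} (hA : A * Aᴴ ≤ 1) (hB : B * Bᴴ ≤ 1) :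
    ‖(S * A * Bᴴ).trace‖ ≤ S.trace.re := by
  obtain ⟨C, rfl⟩ := hS.exists_eq_mul_conjTranspose
  have conj_le : ∀ M : Matrix a b ℂ, M * Mᴴ ≤ 1 →
      ((Cᴴ * M) * (Cᴴ * M)ᴴ).trace.re ≤ (C * Cᴴ).trace.re := by
    intro M hM
    have h := ((le_iff.mp hM).conjTranspose_mul_mul_same C).re_trace_nonneg
    rw [Matrix.mul_sub, Matrix.sub_mul, trace_sub, Matrix.mul_one, trace_mul_comm Cᴴ,
      Complex.sub_re, sub_nonneg] at h
    simpa only [conjTranspose_mul, conjTranspose_conjTranspose, Matrix.mul_assoc] using h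
  have htr : (C * Cᴴ * A * Bᴴ).trace = ((Cᴴ * A) * (Cᴴ * B)ᴴ).trace := by
    rw [conjTranspose_mul, conjTranspose_conjTranspose, Matrix.mul_assoc, Matrix.mul_assoc,
      trace_mul_comm]
    simp only [Matrix.mul_assoc]
  rw [htr, ← sq_le_sq₀ (norm_nonneg _) hS.re_trace_nonneg]
  calc ‖((Cᴴ * A) * (Cᴴ * B)ᴴ).trace‖ ^ 2
      ≤ ((Cᴴ * A) * (Cᴴ * A)ᴴ).trace.re * ((Cᴴ * B) * (Cᴴ * B)ᴴ).trace.re :=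
        norm_trace_mul_conjTranspose_sq_le _ _
    _ ≤ (C * Cᴴ).trace.re ^ 2 := by
        rw [sq]
        exact mul_le_mul (conj_le A hA) (conj_le B hB)
          (posSemidef_self_mul_conjTranspose _).re_trace_nonneg hS.re_trace_nonneg

lemma mul_mul_conjTranspose_le_one [DecidableEq a] [DecidableEq b] {A : Matrix a b ℂ}
    {B : Matrix b c ℂ} (hA : A * Aᴴ ≤ 1) (hB : B * Bᴴ ≤ 1) : (A * B) * (A * B)ᴴ ≤ 1 := by
  rw [le_iff] at *
  convert hA.add (hB.mul_mul_conjTranspose_same A) using 1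
  simp only [conjTranspose_mul, Matrix.mul_sub, Matrix.sub_mul, Matrix.mul_one, Matrix.mul_assoc]
  abel

lemma exists_eq_mul_of_mul_self_eq_mul_conjTranspose [DecidableEq a] {X : Matrix a b ℂ}
    {P : Matrix a a ℂ} (hP : P.IsHermitian) (hPP : P * P = X * Xᴴ) :
    ∃ U : Matrix a b ℂ, X = P * U ∧ U * Uᴴ ≤ 1 := by
  have hP' : IsSelfAdjoint P := hP
  have hc : ∀ f : ℝ → ℝ, ContinuousOn f (spectrum ℝ P) := fun f => (Set.toFinite _).continuousOn f
  -- the Moore–Penrose pseudo-inverse of `P`, as `0⁻¹ = 0` in `ℝ`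
  set Q := cfc (·⁻¹ : ℝ → ℝ) P
  have hQ : Qᴴ = Q := cfc_predicate (·⁻¹ : ℝ → ℝ) P
  have hPQ : Commute P Q := by
    simpa only [cfc_id' ℝ P hP'] using cfc_commute_cfc (fun x : ℝ => x) (·⁻¹) P
  have hPQP : P * Q * P = P := by
    calc P * Q * P = cfc (fun x : ℝ => x * x⁻¹ * x) P := by
          rw [cfc_mul (fun x : ℝ => x * x⁻¹) (fun x => x) P (hc _) (hc _),
            cfc_mul (fun x : ℝ => x) (·⁻¹) P (hc _) (hc _), cfc_id' ℝ P hP']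
      _ = P := by simp only [mul_inv_mul_cancel]; exact cfc_id' ℝ P hP'
  set E := P * Q
  have hE : IsStarProjection E := by
    refine ⟨by rw [IsIdempotentElem, ← Matrix.mul_assoc, hPQP], ?_⟩
    change (P * Q)ᴴ = P * Q
    rw [conjTranspose_mul, hQ, hP.eq, hPQ.eq]
  have hEX : E * X = X := by
    have hEP : (1 - E) * P = 0 := by rw [Matrix.sub_mul, Matrix.one_mul, hPQP, sub_self]
    have h0 : ((1 - E) * X) * ((1 - E) * X)ᴴ = 0 := by
      rw [conjTranspose_mul, Matrix.mul_assoc, ← Matrix.mul_assoc X, ← hPP,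
        ← Matrix.mul_assoc, ← Matrix.mul_assoc, hEP, Matrix.zero_mul, Matrix.zero_mul]
    rw [self_mul_conjTranspose_eq_zero, Matrix.sub_mul, Matrix.one_mul, sub_eq_zero] at h0
    exact h0.symm
  refine ⟨Q * X, by rw [← Matrix.mul_assoc, hEX], ?_⟩
  have hQX : (Q * X) * (Q * X)ᴴ = E := by
    rw [conjTranspose_mul, hQ, Matrix.mul_assoc, ← Matrix.mul_assoc X, ← hPP,
      ← Matrix.mul_assoc, ← Matrix.mul_assoc, ← hPQ.eq, hPQP]
  rw [hQX]
  exact hE.le_one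

end Matrix

namespace QEMD

open Matrix

section Fidelity

variable {a b : Type*} [Fintype a] [Fintype b] [DecidableEq a]

lemma msqrt_eq_sqrt {A : Matrix a a ℂ} (hA : A.PosSemidef) : msqrt A = CFC.sqrt A := by
  rw [CFC.sqrt_eq_real_sqrt A hA.nonneg, cfcₙ_eq_cfc, hA.1.cfc_eq, IsHermitian.cfc, msqrt,
    dif_pos hA, Unitary.conjStarAlgAut_apply]
  rfl

lemma msqrt_posSemidef {A : Matrix a a ℂ} (hA : A.PosSemidef) : (msqrt A).PosSemidef := by
  rw [msqrt_eq_sqrt hA]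
  exact nonneg_iff_posSemidef.mp (CFC.sqrt_nonneg A)

lemma msqrt_mul_self_s17 {A : Matrix a a ℂ} (hA : A.PosSemidef) : msqrt A * msqrt A = A := by
  rw [msqrt_eq_sqrt hA, CFC.sqrt_mul_sqrt_self A hA.nonneg]

lemma norm_trace_mul_conjTranspose_le_fidelity (X Y : Matrix a b ℂ) :
    ‖(Y * Xᴴ).trace‖ ≤ fidelity (X * Xᴴ) (Y * Yᴴ) := by
  have hXX := posSemidef_self_mul_conjTranspose X
  have hYY := posSemidef_self_mul_conjTranspose Y
  set P := msqrt (X * Xᴴ)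
  set Q := msqrt (Y * Yᴴ)
  have hP : Pᴴ = P := (msqrt_posSemidef hXX).1.eq
  have hQ : Qᴴ = Q := (msqrt_posSemidef hYY).1.eq
  have hQQ : Q * Q = Y * Yᴴ := msqrt_mul_self_s17 hYY
  obtain ⟨U, hXU, hU⟩ := exists_eq_mul_of_mul_self_eq_mul_conjTranspose hP (msqrt_mul_self_s17 hXX)
  obtain ⟨W, hYW, hW⟩ := exists_eq_mul_of_mul_self_eq_mul_conjTranspose hQ hQQ
  have hT : (P * (Y * Yᴴ) * P).PosSemidef := by
    simpa only [hP] using hYY.mul_mul_conjTranspose_same P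
  set T := msqrt (P * (Y * Yᴴ) * P)
  have hTT : T * T = (P * Q) * (P * Q)ᴴ := by
    rw [msqrt_mul_self_s17 hT, conjTranspose_mul, hP, hQ, ← hQQ]
    simp only [Matrix.mul_assoc]
  obtain ⟨Z, hPQ, hZ⟩ :=
    exists_eq_mul_of_mul_self_eq_mul_conjTranspose (msqrt_posSemidef hT).1 hTT
  calc ‖(Y * Xᴴ).trace‖ = ‖(P * Q * W * Uᴴ).trace‖ := by
        rw [hYW, hXU, conjTranspose_mul, hP, ← Matrix.mul_assoc, trace_mul_comm,
          ← Matrix.mul_assoc, ← Matrix.mul_assoc]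
    _ = ‖(T * (Z * W) * Uᴴ).trace‖ := by rw [hPQ, Matrix.mul_assoc T Z W]
    _ ≤ T.trace.re :=
        norm_trace_mul_mul_conjTranspose_le (msqrt_posSemidef hT)
          (mul_mul_conjTranspose_le_one hZ hW) hU

end Fidelity

section Marginals

variable {m c k : Type*} [Fintype m] [Fintype k]

def acFactor (R : Matrix ((m × m) × c) k ℂ) : Matrix (m × c) (m × k) ℂ :=
  of fun p q => R ((p.1, q.1), p.2) q.2

def bcFactor (R : Matrix ((m × m) × c) k ℂ) : Matrix (m × c) (m × k) ℂ :=
  of fun p q => R ((q.1, p.1), p.2) q.2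

lemma acFactor_mul_conjTranspose (R : Matrix ((m × m) × c) k ℂ) :
    acFactor R * (acFactor R)ᴴ =
      of fun p q => ∑ b, (R * Rᴴ) ((p.1, b), p.2) ((q.1, b), q.2) := by
  ext p q
  simp [acFactor, mul_apply, Fintype.sum_prod_type]

lemma bcFactor_mul_conjTranspose (R : Matrix ((m × m) × c) k ℂ) :
    bcFactor R * (bcFactor R)ᴴ =
      of fun p q => ∑ a, (R * Rᴴ) ((a, p.1), p.2) ((a, q.1), q.2) := by
  ext p q
  simp [bcFactor, mul_apply, Fintype.sum_prod_type]

lemma swap_mul_apply {d : ℕ} {n : Type*} (M : Matrix (Fin d × Fin d) n ℂ)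
    (p : Fin d × Fin d) (q : n) : (swap d * M) p q = M p.swap q := by
  rw [mul_apply, Finset.sum_eq_single p.swap]
  · simp [swap]
  · rintro r - hr
    rw [swap, of_apply, if_neg fun h => hr (Prod.ext h.2.symm h.1.symm), zero_mul]
  · simp

lemma trace_swap_mul_traceRight [Fintype c] {d : ℕ} (R : Matrix ((Fin d × Fin d) × c) k ℂ) :
    (swap d * traceRight (R * Rᴴ)).trace = (bcFactor R * (acFactor R)ᴴ).trace := by
  simp only [trace, diag, swap_mul_apply]
  simp only [traceRight, mul_apply, of_apply, acFactor, bcFactor, Fintype.sum_prod_type,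
    conjTranspose_apply, Prod.swap_prod_mk]
  exact Finset.sum_congr rfl fun _ _ => Finset.sum_comm

lemma Pasym_sub_Psym (d : ℕ) : Pasym d - Psym d = -swap d := by
  have h : (1 - swap d) - (1 + swap d) = (2 : ℂ) • -swap d := by rw [two_smul]; abel
  rw [Pasym, Psym, ← smul_sub, h, smul_smul, inv_mul_cancel₀ two_ne_zero, one_smul]

end Marginals

theorem stmt17 (d d2 : ℕ)
    (ρ : Matrix ((Fin d × Fin d) × Fin d2) ((Fin d × Fin d) × Fin d2) ℂ)
    (hρ : IsDensity ρ)
    (ρAB : Matrix (Fin d × Fin d) (Fin d × Fin d) ℂ) (hAB : ρAB = traceRight ρ)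
    (ρAC ρBC : Matrix (Fin d × Fin d2) (Fin d × Fin d2) ℂ)
    (hAC : ρAC = Matrix.of fun p q => ∑ b, ρ ((p.1, b), p.2) ((q.1, b), q.2))
    (hBC : ρBC = Matrix.of fun p q => ∑ a, ρ ((a, p.1), p.2) ((a, q.1), q.2)) :
    fidelity ρAC ρBC
      ≥ |((Pasym d * ρAB).trace).re - ((Psym d * ρAB).trace).re| := by
  obtain ⟨R, rfl⟩ := hρ.1.exists_eq_mul_conjTranspose
  subst hAB
  rw [hAC, hBC, ← acFactor_mul_conjTranspose, ← bcFactor_mul_conjTranspose, ge_iff_le]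
  calc |((Pasym d * traceRight (R * Rᴴ)).trace).re - ((Psym d * traceRight (R * Rᴴ)).trace).re|
      = |(swap d * traceRight (R * Rᴴ)).trace.re| := by
        rw [← Complex.sub_re, ← trace_sub, ← Matrix.sub_mul, Pasym_sub_Psym, Matrix.neg_mul,
          trace_neg, Complex.neg_re, abs_neg]
    _ ≤ ‖(swap d * traceRight (R * Rᴴ)).trace‖ := Complex.abs_re_le_norm _
    _ = ‖(bcFactor R * (acFactor R)ᴴ).trace‖ := by rw [trace_swap_mul_traceRight]
    _ ≤ fidelity (acFactor R * (acFactor R)ᴴ) (bcFactor R * (bcFactor R)ᴴ) :=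
        norm_trace_mul_conjTranspose_le_fidelity _ _

end QEMD
end
end
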